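/- Let T be a contraction on a complex Hilbert space H and let P be the asymptotic limit of T*. Then for every h ∈ H the series Σ_{k=0}^∞ ‖D_{T*} T*ᵏ h‖² converges and Σ_{k=0}^∞ ‖D_{T*} T*ᵏ h‖² = ‖h‖² − ‖Ph‖². Consequently, the map E_D : H → ℓ²(ℕ, 𝒟_{T*}) ⊕ H defined by E_D h := ((D_{T*} T*ᵏ h)_{k≥0}, Ph) is a well-defined linear isometry. -/

import Mathlib

noncomputable section

open scoped ENNReal

namespace GammaModel

variable {E : Type*} [NormedAddCommGroup E] [NormedSpace ℂ E]

/-- The `E`-valued Hardy space `H²_E(𝔻)`, identified with `ℓ²(ℕ, E)`. -/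
abbrev L2 (E : Type*) [NormedAddCommGroup E] [NormedSpace ℂ E] : Type _ :=
  lp (fun _ : ℕ => E) 2

/-- The underlying function of the unilateral shift. -/
def shiftFun (f : ℕ → E) : ℕ → E
  | 0 => 0
  | (k + 1) => f k

lemma rpow_toReal_two (x : ℝ) : x ^ ((2 : ℝ≥0∞)).toReal = x ^ (2 : ℕ) := by
  rw [show ((2 : ℝ≥0∞)).toReal = ((2 : ℕ) : ℝ) by norm_num, Real.rpow_natCast]

lemma summable_sq_of_mem (f : L2 E) :
    Summable (fun k => ‖(f : ∀ _ : ℕ, E) k‖ ^ (2 : ℕ)) := by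
  have h := lp.memℓp f
  rw [memℓp_gen_iff (by norm_num)] at h
  simpa [rpow_toReal_two] using h

lemma memℓp_shiftFun (f : L2 E) : Memℓp (shiftFun (f : ∀ _ : ℕ, E)) 2 := by
  rw [memℓp_gen_iff (by norm_num)]
  apply (summable_nat_add_iff 1).mp
  simpa [shiftFun, rpow_toReal_two] using summable_sq_of_mem f

/-- The unilateral shift as a linear map on `ℓ²(ℕ, E)`. -/
def shiftLM : L2 E →ₗ[ℂ] L2 E where
  toFun f := ⟨shiftFun (f : ∀ _ : ℕ, E), memℓp_shiftFun f⟩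
  map_add' f g := by
    ext k
    cases k <;> simp [shiftFun, lp.coeFn_add, Pi.add_apply] <;> first | rfl | exact (add_zero _).symm
  map_smul' c f := by
    ext k
    cases k <;> simp [shiftFun, lp.coeFn_smul, Pi.smul_apply]

lemma norm_shiftLM (f : L2 E) : ‖shiftLM f‖ = ‖f‖ := by
  have h2 : (0:ℝ) < ((2 : ℝ≥0∞)).toReal := by norm_num
  have hs := lp.norm_rpow_eq_tsum h2 (shiftLM f)
  have hf := lp.norm_rpow_eq_tsum h2 f
  have hsum : Summable (fun k => ‖(shiftLM f : ∀ _ : ℕ, E) k‖ ^ ((2:ℝ≥0∞)).toReal) := by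
    have h := memℓp_shiftFun f
    rw [memℓp_gen_iff h2] at h
    exact h
  have key : ∑' k, ‖(shiftLM f : ∀ _ : ℕ, E) k‖ ^ ((2:ℝ≥0∞)).toReal
      = ∑' k, ‖(f : ∀ _ : ℕ, E) k‖ ^ ((2:ℝ≥0∞)).toReal := by
    rw [Summable.tsum_eq_zero_add hsum]
    simp [shiftLM, shiftFun]
  have : ‖shiftLM f‖ ^ ((2:ℝ≥0∞)).toReal = ‖f‖ ^ ((2:ℝ≥0∞)).toReal := by
    rw [hs, hf, key]
  rw [rpow_toReal_two, rpow_toReal_two] at this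
  have h1 : (0:ℝ) ≤ ‖shiftLM f‖ := norm_nonneg _
  have h2' : (0:ℝ) ≤ ‖f‖ := norm_nonneg _
  nlinarith [this, h1, h2']

/-- The unilateral shift `S` on `ℓ²(ℕ, E)`: `(Sf)(0) = 0`, `(Sf)(k+1) = f(k)`. -/
def shiftL : L2 E →L[ℂ] L2 E :=
  LinearMap.mkContinuous shiftLM 1 (fun f => by rw [norm_shiftLM]; simp)

@[simp] lemma shiftL_apply_zero (f : L2 E) : (shiftL f : ∀ _ : ℕ, E) 0 = 0 := rfl

@[simp] lemma shiftL_apply_succ (f : L2 E) (k : ℕ) :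
    (shiftL f : ∀ _ : ℕ, E) (k + 1) = (f : ∀ _ : ℕ, E) k := rfl

lemma memℓp_diagFun (C : E →L[ℂ] E) (f : L2 E) :
    Memℓp (fun k => C ((f : ∀ _ : ℕ, E) k)) 2 := by
  rw [memℓp_gen_iff (by norm_num)]
  have hf := summable_sq_of_mem f
  refine Summable.of_nonneg_of_le (f := fun k => ‖C‖ ^ (2:ℕ) * ‖(f : ∀ _ : ℕ, E) k‖ ^ (2:ℕ))
    (fun k => by positivity) (fun k => ?_) (hf.mul_left _)
  show ‖C ((f : ∀ _ : ℕ, E) k)‖ ^ ((2:ℝ≥0∞)).toReal ≤ ‖C‖ ^ (2:ℕ) * ‖(f : ∀ _ : ℕ, E) k‖ ^ (2:ℕ)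
  rw [rpow_toReal_two, ← mul_pow]
  exact pow_le_pow_left₀ (norm_nonneg _) (C.le_opNorm _) 2

/-- The diagonal operator `C̃` on `ℓ²(ℕ, E)`: `(C̃ f)(k) = C (f k)`. -/
def diagLM (C : E →L[ℂ] E) : L2 E →ₗ[ℂ] L2 E where
  toFun f := ⟨fun k => C ((f : ∀ _ : ℕ, E) k), memℓp_diagFun C f⟩
  map_add' f g := by ext k; simp [lp.coeFn_add, Pi.add_apply]; rfl
  map_smul' c f := by ext k; simp [lp.coeFn_smul, Pi.smul_apply]

lemma norm_diagLM (C : E →L[ℂ] E) (f : L2 E) : ‖diagLM C f‖ ≤ ‖C‖ * ‖f‖ := by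
  have h2 : (0:ℝ) < ((2 : ℝ≥0∞)).toReal := by norm_num
  have hs := lp.norm_rpow_eq_tsum h2 (diagLM C f)
  have hf := lp.norm_rpow_eq_tsum h2 f
  have hsum : Summable (fun k => ‖(diagLM C f : ∀ _ : ℕ, E) k‖ ^ ((2:ℝ≥0∞)).toReal) := by
    have h := memℓp_diagFun C f
    rw [memℓp_gen_iff h2] at h
    exact h
  have hle : ‖diagLM C f‖ ^ (2:ℕ) ≤ (‖C‖ * ‖f‖) ^ (2:ℕ) := by
    rw [← rpow_toReal_two, hs]
    calc ∑' k, ‖(diagLM C f : ∀ _ : ℕ, E) k‖ ^ ((2:ℝ≥0∞)).toReal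
        ≤ ∑' k, ‖C‖ ^ (2:ℕ) * ‖(f : ∀ _ : ℕ, E) k‖ ^ (2:ℕ) := by
          apply Summable.tsum_le_tsum _ hsum ((summable_sq_of_mem f).mul_left _)
          intro k
          show ‖(diagLM C f : ∀ _ : ℕ, E) k‖ ^ ((2:ℝ≥0∞)).toReal
            ≤ ‖C‖ ^ (2:ℕ) * ‖(f : ∀ _ : ℕ, E) k‖ ^ (2:ℕ)
          rw [rpow_toReal_two, ← mul_pow]
          exact pow_le_pow_left₀ (norm_nonneg _) (C.le_opNorm _) 2
      _ = ‖C‖ ^ (2:ℕ) * ∑' k, ‖(f : ∀ _ : ℕ, E) k‖ ^ (2:ℕ) := by rw [tsum_mul_left]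
      _ = (‖C‖ * ‖f‖) ^ (2:ℕ) := by
          rw [mul_pow]
          congr 1
          rw [← rpow_toReal_two ‖f‖, hf]
          exact (tsum_congr (fun k => by rw [rpow_toReal_two])).symm
  have := le_of_pow_le_pow_left₀ (by norm_num) (by positivity) hle
  exact this

/-- The operator `C̃` on `ℓ²(ℕ, E)` induced by `C : E →L[ℂ] E`, `(C̃ f)(k) = C (f k)`. -/
def diagL (C : E →L[ℂ] E) : L2 E →L[ℂ] L2 E :=
  LinearMap.mkContinuous (diagLM C) ‖C‖ (norm_diagLM C)

@[simp] lemma diagL_apply (C : E →L[ℂ] E) (f : L2 E) (k : ℕ) :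
    (diagL C f : ∀ _ : ℕ, E) k = C ((f : ∀ _ : ℕ, E) k) := rfl

end GammaModel
namespace GammaModel

/-- `P` is the asymptotic limit of `T*`: `P` is positive and
`⟨P²h, h⟩ = lim_k ‖T*ᵏ h‖²` for every `h`. -/
def IsAsymptoticLimit {H : Type*} [NormedAddCommGroup H] [InnerProductSpace ℂ H]
    [CompleteSpace H] (T P : H →L[ℂ] H) : Prop :=
  P.IsPositive ∧ ∀ h : H,
    Filter.Tendsto (fun k : ℕ => ‖(ContinuousLinearMap.adjoint T ^ k) h‖ ^ 2)
      Filter.atTop (nhds ((@inner ℂ H _ ((P * P) h) h).re))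

end GammaModel

open GammaModel ContinuousLinearMap

/-! The defect identity `‖D_{T*} x‖² = ‖x‖² - ‖T* x‖²` makes `∑_{k<n} ‖D_{T*} T*ᵏ h‖²` telescope
to `‖h‖² - ‖T*ⁿ h‖²`, which tends to `‖h‖² - ‖P h‖²`. Hence the two components of `E_D h` have
squared norms adding up to `‖h‖²`. -/

open Filter Topology

theorem hasSum_sub_succ_of_tendsto {a : ℕ → ℝ} {l : ℝ} (hanti : ∀ k, a (k + 1) ≤ a k)
    (hlim : Tendsto a atTop (𝓝 l)) : HasSum (fun k => a k - a (k + 1)) (a 0 - l) := by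
  rw [hasSum_iff_tendsto_nat_of_nonneg (fun k => sub_nonneg.2 (hanti k))]
  simp only [Finset.sum_range_sub']
  exact tendsto_const_nhds.sub hlim

theorem lp.norm_sq_eq_tsum {ι : Type*} {E : ι → Type*} [∀ i, NormedAddCommGroup (E i)]
    (f : lp E 2) : ‖f‖ ^ 2 = ∑' i, ‖f i‖ ^ 2 := by
  simpa [rpow_toReal_two] using lp.norm_rpow_eq_tsum (by norm_num) f

section lp

variable {𝕜 F E : Type*} [NormedField 𝕜] [AddCommGroup F] [Module 𝕜 F]
  [NormedAddCommGroup E] [NormedSpace 𝕜 E]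

def LinearMap.lpOfSummableNormSq (A : ℕ → F →ₗ[𝕜] E)
    (hA : ∀ x, Summable fun k => ‖A k x‖ ^ 2) : F →ₗ[𝕜] lp (fun _ : ℕ => E) 2 where
  toFun x := ⟨fun k => A k x, memℓp_gen (by simpa [rpow_toReal_two] using hA x)⟩
  map_add' x y := by ext k; exact map_add (A k) x y
  map_smul' c x := by ext k; exact map_smul (A k) c x

theorem LinearMap.norm_sq_lpOfSummableNormSq (A : ℕ → F →ₗ[𝕜] E)
    (hA : ∀ x, Summable fun k => ‖A k x‖ ^ 2) (x : F) :
    ‖lpOfSummableNormSq A hA x‖ ^ 2 = ∑' k, ‖A k x‖ ^ 2 :=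
  lp.norm_sq_eq_tsum _

end lp

section ProdL2

variable {R F E₁ E₂ : Type*} [Semiring R] [SeminormedAddCommGroup F] [Module R F]
  [SeminormedAddCommGroup E₁] [Module R E₁] [SeminormedAddCommGroup E₂] [Module R E₂]

def LinearMap.prodL2Isometry (f : F →ₗ[R] E₁) (g : F →ₗ[R] E₂)
    (hfg : ∀ x, ‖f x‖ ^ 2 + ‖g x‖ ^ 2 = ‖x‖ ^ 2) : F →ₗᵢ[R] WithLp 2 (E₁ × E₂) where
  toLinearMap := (WithLp.linearEquiv 2 R (E₁ × E₂)).symm.toLinearMap ∘ₗ f.prod g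
  norm_map' x := by
    refine (sq_eq_sq₀ (norm_nonneg _) (norm_nonneg _)).1 ?_
    rw [WithLp.prod_norm_sq_eq_of_L2]
    exact hfg x

end ProdL2

section Defect

variable {𝕜 E : Type*} [RCLike 𝕜] [NormedAddCommGroup E] [InnerProductSpace 𝕜 E] [CompleteSpace E]

theorem IsSelfAdjoint.norm_sq_apply {A : E →L[𝕜] E} (hA : IsSelfAdjoint A) (x : E) :
    ‖A x‖ ^ 2 = RCLike.re (inner 𝕜 ((A * A) x) x) := by
  rw [apply_norm_sq_eq_inner_adjoint_left, hA.adjoint_eq]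
  rfl

theorem norm_sq_defect_apply {T D : E →L[𝕜] E} (hD : IsSelfAdjoint D)
    (hDsq : D * D = 1 - T * adjoint T) (x : E) :
    ‖D x‖ ^ 2 = ‖x‖ ^ 2 - ‖adjoint T x‖ ^ 2 := by
  rw [hD.norm_sq_apply, hDsq, apply_norm_sq_eq_inner_adjoint_left, adjoint_adjoint]
  simp [inner_sub_left]

theorem hasSum_norm_sq_defect_adjoint_pow {T D : E →L[𝕜] E} (hD : IsSelfAdjoint D)
    (hDsq : D * D = 1 - T * adjoint T) {x : E} {L : ℝ}
    (hlim : Tendsto (fun k => ‖(adjoint T ^ k) x‖ ^ 2) atTop (𝓝 L)) :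
    HasSum (fun k => ‖D ((adjoint T ^ k) x)‖ ^ 2) (‖x‖ ^ 2 - L) := by
  have hstep (k : ℕ) : ‖D ((adjoint T ^ k) x)‖ ^ 2
      = ‖(adjoint T ^ k) x‖ ^ 2 - ‖(adjoint T ^ (k + 1)) x‖ ^ 2 := by
    rw [norm_sq_defect_apply hD hDsq, pow_succ' (adjoint T) k]
    rfl
  have hanti (k : ℕ) : ‖(adjoint T ^ (k + 1)) x‖ ^ 2 ≤ ‖(adjoint T ^ k) x‖ ^ 2 :=
    sub_nonneg.1 (hstep k ▸ sq_nonneg _)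
  simp only [hstep]
  simpa using hasSum_sub_succ_of_tendsto hanti hlim

def adjointPowDefect (T D : E →L[𝕜] E) (k : ℕ) :
    E →ₗ[𝕜] (LinearMap.range (D : E →ₗ[𝕜] E)).topologicalClosure :=
  (((D * adjoint T ^ k : E →L[𝕜] E) : E →ₗ[𝕜] E)).codRestrict _
    fun _ => Submodule.le_topologicalClosure _ ⟨_, rfl⟩

theorem norm_adjointPowDefect_apply (T D : E →L[𝕜] E) (k : ℕ) (x : E) :
    ‖adjointPowDefect T D k x‖ = ‖D ((adjoint T ^ k) x)‖ :=
  rfl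

end Defect

theorem GammaModel.IsAsymptoticLimit.tendsto_norm_sq {H : Type*} [NormedAddCommGroup H]
    [InnerProductSpace ℂ H] [CompleteSpace H] {T P : H →L[ℂ] H} (hP : IsAsymptoticLimit T P)
    (h : H) : Tendsto (fun k => ‖(adjoint T ^ k) h‖ ^ 2) atTop (𝓝 (‖P h‖ ^ 2)) := by
  rw [hP.1.isSelfAdjoint.norm_sq_apply]
  exact hP.2 h

theorem douglas_embedding_isometry_general {H : Type*}
    [NormedAddCommGroup H] [InnerProductSpace ℂ H] [CompleteSpace H]
    (T : H →L[ℂ] H)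
    (DT : H →L[ℂ] H) (hDTpos : DT.IsPositive)
    (hDTsq : DT * DT = 1 - T * adjoint T)
    (P : H →L[ℂ] H) (hP : IsAsymptoticLimit T P) :
    (∀ h : H, Summable (fun k : ℕ => ‖DT ((adjoint T ^ k) h)‖ ^ 2)) ∧
    (∀ h : H, ∑' k : ℕ, ‖DT ((adjoint T ^ k) h)‖ ^ 2 = ‖h‖ ^ 2 - ‖P h‖ ^ 2) ∧
    (∃ ED : H →ₗᵢ[ℂ] WithLp 2 (L2 ↥((LinearMap.range (DT : H →ₗ[ℂ] H)).topologicalClosure) × H),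
      ∀ h : H,
        (∀ k : ℕ,
          (((WithLp.equiv 2 (L2 ↥((LinearMap.range (DT : H →ₗ[ℂ] H)).topologicalClosure) × H) (ED h)).1
              : ∀ _ : ℕ, ↥((LinearMap.range (DT : H →ₗ[ℂ] H)).topologicalClosure)) k : H)
            = DT ((adjoint T ^ k) h)) ∧
        (WithLp.equiv 2 (L2 ↥((LinearMap.range (DT : H →ₗ[ℂ] H)).topologicalClosure) × H) (ED h)).2 = P h) := by
  have hsum (h : H) := hasSum_norm_sq_defect_adjoint_pow hDTpos.isSelfAdjoint hDTsq
    (hP.tendsto_norm_sq h)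
  refine ⟨fun h => (hsum h).summable, fun h => (hsum h).tsum_eq, ?_⟩
  simp only [← norm_adjointPowDefect_apply] at hsum
  let defects := LinearMap.lpOfSummableNormSq (adjointPowDefect T DT) fun h => (hsum h).summable
  refine ⟨defects.prodL2Isometry (P : H →ₗ[ℂ] H) fun h => ?_, fun h => ⟨fun k => rfl, rfl⟩⟩
  rw [LinearMap.norm_sq_lpOfSummableNormSq _ _ h, (hsum h).tsum_eq, coe_coe, sub_add_cancel]

/-- For a contraction `T` with defect operator `D_{T*}` (the positive square
root of `I − TT*`), defect space `𝒟_{T*} = closure (range D_{T*})` and asymptotic limit `P` of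
`T*`: for every `h` the series `Σ_k ‖D_{T*} T*ᵏ h‖²` converges with sum `‖h‖² − ‖Ph‖²`, and
`E_D h = ((D_{T*} T*ᵏ h)_k, Ph)` defines a linear isometry `H → ℓ²(ℕ, 𝒟_{T*}) ⊕ H`. -/
theorem douglas_embedding_isometry {H : Type*}
    [NormedAddCommGroup H] [InnerProductSpace ℂ H] [CompleteSpace H]
    (T : H →L[ℂ] H) (hT : ‖T‖ ≤ 1)
    (DT : H →L[ℂ] H) (hDTpos : DT.IsPositive)
    (hDTsq : DT * DT = 1 - T * adjoint T)
    (P : H →L[ℂ] H) (hP : IsAsymptoticLimit T P) :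
    (∀ h : H, Summable (fun k : ℕ => ‖DT ((adjoint T ^ k) h)‖ ^ 2)) ∧
    (∀ h : H, ∑' k : ℕ, ‖DT ((adjoint T ^ k) h)‖ ^ 2 = ‖h‖ ^ 2 - ‖P h‖ ^ 2) ∧
    (∃ ED : H →ₗᵢ[ℂ] WithLp 2 (L2 ↥((LinearMap.range (DT : H →ₗ[ℂ] H)).topologicalClosure) × H),
      ∀ h : H,
        (∀ k : ℕ,
          (((WithLp.equiv 2 (L2 ↥((LinearMap.range (DT : H →ₗ[ℂ] H)).topologicalClosure) × H) (ED h)).1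
              : ∀ _ : ℕ, ↥((LinearMap.range (DT : H →ₗ[ℂ] H)).topologicalClosure)) k : H)
            = DT ((adjoint T ^ k) h)) ∧
        (WithLp.equiv 2 (L2 ↥((LinearMap.range (DT : H →ₗ[ℂ] H)).topologicalClosure) × H) (ED h)).2 = P h) :=
  douglas_embedding_isometry_general T DT hDTpos hDTsq P hP
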